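/- arXiv:math/0307385 — 7 statements merged into one kernel-verified Lean document; each statement's English description precedes it below -/
import Mathlib

section
/- If R is the inverse limit of a sequence of von Neumann regular rings (R_n) with surjective connecting homomorphisms π_n : R_n → R_{n-1}, then R is von Neumann regular. -/
/-- The inverse limit of a sequence of (not necessarily unital) rings along
connecting homomorphisms `π n : R (n+1) → R n`, realized as the non-unital
subring of coherent strings in the product. -/
def invLimN (R : ℕ → Type*) [∀ n, NonUnitalRing (R n)]
    (π : ∀ n, R (n + 1) →ₙ+* R n) : NonUnitalSubring (∀ n, R n) where
  carrier := {x | ∀ n, π n (x (n + 1)) = x n}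
  zero_mem' := by intro n; simp
  add_mem' := by intro a b ha hb n; simp [ha n, hb n]
  mul_mem' := by intro a b ha hb n; simp [ha n, hb n]
  neg_mem' := by intro a ha n; simp [ha n]

/-- If `R` is the inverse limit of a sequence of von Neumann regular rings with
surjective connecting homomorphisms, then `R` is von Neumann regular. -/
theorem stmt0 (R : ℕ → Type*) [∀ n, NonUnitalRing (R n)]
    (π : ∀ n, R (n + 1) →ₙ+* R n)
    (hsurj : ∀ n, Function.Surjective (π n))
    (hreg : ∀ n, ∀ x : R n, ∃ y : R n, x = x * y * x) :
    ∀ x : ↥(invLimN R π), ∃ y : ↥(invLimN R π), x = x * y * x := by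
  intro x
  have key : ∀ n (y : R n), (x : ∀ n, R n) n = (x : ∀ n, R n) n * y * (x : ∀ n, R n) n →
      ∃ y' : R (n+1), (x : ∀ n, R n) (n+1) = (x : ∀ n, R n) (n+1) * y' * (x : ∀ n, R n) (n+1) ∧
        π n y' = y := by
    intro n y hy
    obtain ⟨z0, hz0⟩ := hreg (n+1) ((x : ∀ n, R n) (n+1))
    obtain ⟨u, hu⟩ := hsurj n y
    set a := (x : ∀ n, R n) (n+1) with ha
    set b := (x : ∀ n, R n) n with hb
    have hπa : π n a = b := x.2 n
    refine ⟨u + z0*a*z0 - z0*a*z0*a*u*a*(z0*a*z0), ?_, ?_⟩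
    · have h2 : a*(z0*a) = a := by rw [← mul_assoc, ← hz0]
      have h1 : ∀ c : R (n+1), a*(z0*(a*c)) = a*c := by
        intro c
        rw [← mul_assoc, ← mul_assoc, ← hz0]
      simp only [mul_add, mul_sub, add_mul, sub_mul, mul_assoc, h1, h2]
      abel
    · set w := π n z0 with hw
      have hbw : b = b * w * b := by
        have := congrArg (π n) hz0
        simpa [hπa] using this
      have hb2 : b*(w*b) = b := by rw [← mul_assoc, ← hbw]
      have hb1 : ∀ c : R n, b*(w*(b*c)) = b*c := by
        intro c; rw [← mul_assoc, ← mul_assoc, ← hbw]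
      have hy2 : b*(y*b) = b := by rw [← mul_assoc, ← hy]
      have hy1 : ∀ c : R n, b*(y*(b*c)) = b*c := by
        intro c; rw [← mul_assoc, ← mul_assoc, ← hy]
      simp only [map_add, map_sub, map_mul, hu, hπa, ← hw]
      simp only [mul_assoc, hb1, hb2, hy1, hy2]
      abel
  obtain ⟨y0, hy0⟩ := hreg 0 ((x : ∀ n, R n) 0)
  choose step hstep hstepπ using key
  let Y : ∀ n, {y : R n // (x : ∀ n, R n) n = (x : ∀ n, R n) n * y * (x : ∀ n, R n) n} :=
    fun n => Nat.rec ⟨y0, hy0⟩ (fun n p => ⟨step n p.1 p.2, hstep n p.1 p.2⟩) n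
  have hYc : ∀ n, π n (Y (n+1)).1 = (Y n).1 := fun n => hstepπ n (Y n).1 (Y n).2
  refine ⟨⟨fun n => (Y n).1, hYc⟩, ?_⟩
  apply Subtype.ext
  funext n
  exact (Y n).2
end

section
/- Let R be a unital ring with Bass stable rank at most d. Given rows a, x ∈ R^d with a·x = 1 − s for some s ∈ R (where a·x denotes Σ a_i x_i), there exist rows b, y ∈ R^d and an element z ∈ R such that (a + s·b) · (x + y·s·z) = 1, where s·b denotes the row (s b_1, ..., s b_d) and y·s·z denotes (y_1 s z, ..., y_d s z). -/
/-- `BsrLe R d` : the Bass stable rank of the unital ring `R` is at most `d`,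
i.e. for every `m ≥ d`, every right unimodular row of length `m+1` can be
reduced to a right unimodular row of length `m` by adding right multiples of
the first entry. -/
def BsrLe (R : Type*) [Ring R] (d : ℕ) : Prop :=
  ∀ m : ℕ, d ≤ m → ∀ a : Fin (m + 1) → R,
    (∃ x : Fin (m + 1) → R, ∑ i, a i * x i = 1) →
    ∃ b : Fin m → R, ∃ y : Fin m → R, ∑ i, (a i.succ + a 0 * b i) * y i = 1

/-- If `bsr R ≤ d` and `a·x = 1 - s` for rows `a, x ∈ R^d`, then there are rows
`b, y ∈ R^d` and `z ∈ R` with `(a + s b)·(x + y s z) = 1`. -/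
theorem stmt4 {R : Type*} [Ring R] {d : ℕ} (h : BsrLe R d)
    (a x : Fin d → R) (s : R)
    (hax : ∑ i, a i * x i = 1 - s) :
    ∃ (b y : Fin d → R) (z : R),
      ∑ i, (a i + s * b i) * (x i + y i * s * z) = 1 := by
  obtain ⟨b, y, hby⟩ := h d le_rfl (Fin.cases s a) ⟨Fin.cases 1 x, by
    rw [Fin.sum_univ_succ]
    simp only [Fin.cases_zero, Fin.cases_succ, mul_one]
    rw [hax]; noncomm_ring⟩
  simp only [Fin.cases_zero, Fin.cases_succ] at hby
  refine ⟨b, y, 1 - ∑ i, b i * x i, ?_⟩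
  have key : ∑ i, (a i + s * b i) * (x i + y i * s * (1 - ∑ i, b i * x i))
      = (∑ i, (a i + s * b i) * x i)
        + (∑ i, (a i + s * b i) * y i) * (s * (1 - ∑ i, b i * x i)) := by
    rw [Finset.sum_mul, ← Finset.sum_add_distrib]
    congr 1; ext i; noncomm_ring
  rw [key, hby]
  have h2 : ∑ i, (a i + s * b i) * x i = (1 - s) + s * ∑ i, b i * x i := by
    rw [Finset.mul_sum, ← hax, ← Finset.sum_add_distrib]
    congr 1; ext i; noncomm_ring
  rw [h2]; noncomm_ring
end

section
/- Let π : R → S be a surjective homomorphism of unital rings, with bsr(R) ≤ d. Suppose a, x ∈ R^{d+1} with a·x = 1, and suppose b̄, ȳ ∈ S^d satisfy (π(a^r) + π(a_0)·b̄) · ȳ = 1, where a = (a_0, a^r) with a^r ∈ R^d. Then there exist b, y ∈ R^d with π(b) = b̄, π(y) = ȳ, and (a^r + a_0·b) · y = 1. -/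
section Rows

variable {R S : Type*} [Ring R] [Ring S] {n : ℕ}

theorem mul_sub_dotProduct_add_add_smul_dotProduct (a₀ x₀ : R) (a b x : Fin n → R) :
    a₀ * (x₀ - b ⬝ᵥ x) + (a + a₀ • b) ⬝ᵥ x = a₀ * x₀ + a ⬝ᵥ x := by
  rw [add_dotProduct, smul_dotProduct, smul_eq_mul, mul_sub]
  abel

theorem dotProduct_add_mul_right (v y x : Fin n → R) (k : R) :
    v ⬝ᵥ (fun i => y i + x i * k) = v ⬝ᵥ y + v ⬝ᵥ x * k := by
  simp only [dotProduct, mul_add, Finset.sum_add_distrib, Finset.sum_mul, mul_assoc]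

theorem mul_mul_sub_dotProduct_add_dotProduct_eq_one {a₀ p : R} {v x : Fin n → R}
    (h : a₀ * p + v ⬝ᵥ x = 1) (y : Fin n → R) :
    a₀ * (p * (1 - v ⬝ᵥ y)) + v ⬝ᵥ (fun i => y i + x i * (1 - v ⬝ᵥ y)) = 1 := by
  calc a₀ * (p * (1 - v ⬝ᵥ y)) + v ⬝ᵥ (fun i => y i + x i * (1 - v ⬝ᵥ y))
      = (a₀ * p + v ⬝ᵥ x) * (1 - v ⬝ᵥ y) + v ⬝ᵥ y := by
        rw [dotProduct_add_mul_right, add_mul, mul_assoc]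
        abel
    _ = 1 := by rw [h, one_mul, sub_add_cancel]

theorem exists_lift_dotProduct_eq_one (π : R →+* S) {w z y : Fin n → R} (hwz : w ⬝ᵥ z = 1)
    (hy : π (w ⬝ᵥ y) = 1) : ∃ y' : Fin n → R, (∀ i, π (y' i) = π (y i)) ∧ w ⬝ᵥ y' = 1 :=
  ⟨fun i => y i + z i * (1 - w ⬝ᵥ y),
    fun i => by rw [map_add, map_mul, map_sub, hy, map_one, sub_self, mul_zero, add_zero],
    by rw [dotProduct_add_mul_right, hwz, one_mul, add_sub_cancel]⟩

theorem BsrLe.exists_add_smul_dotProduct_eq_one {d : ℕ} (h : BsrLe R d) {a₀ t : R}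
    {v u : Fin d → R} (hu : a₀ * t + v ⬝ᵥ u = 1) : ∃ c z : Fin d → R, (v + a₀ • c) ⬝ᵥ z = 1 :=
  h d le_rfl (Fin.cons a₀ v) ⟨Fin.cons t u, by simpa [Fin.sum_univ_succ, dotProduct] using hu⟩

end Rows

/-- Lifting of row reductions along a surjective morphism, when `bsr R ≤ d`. -/
theorem stmt5 {R S : Type*} [Ring R] [Ring S]
    (π : R →+* S) (hπ : Function.Surjective π)
    {d : ℕ} (h : BsrLe R d)
    (a x : Fin (d + 1) → R) (hax : ∑ i, a i * x i = 1)
    (bb yb : Fin d → S)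
    (hby : ∑ i, (π (a i.succ) + π (a 0) * bb i) * yb i = 1) :
    ∃ b y : Fin d → R,
      (∀ i, π (b i) = bb i) ∧ (∀ i, π (y i) = yb i) ∧
      ∑ i, (a i.succ + a 0 * b i) * y i = 1 := by
  choose b₀ hb₀ using fun i => hπ (bb i)
  choose y₀ hy₀ using fun i => hπ (yb i)
  have hlift : ∀ b : Fin d → R, (∀ i, π (b i) = bb i) →
      π ((Fin.tail a + a 0 • b) ⬝ᵥ y₀) = 1 := fun b hb => by
    simpa [RingHom.map_dotProduct, dotProduct, hb, hy₀, Fin.tail] using hby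
  set v := Fin.tail a + a 0 • b₀
  set α := (x 0 - b₀ ⬝ᵥ Fin.tail x) * (1 - v ⬝ᵥ y₀)
  have hv : a 0 * (x 0 - b₀ ⬝ᵥ Fin.tail x) + v ⬝ᵥ Fin.tail x = 1 := by
    rw [mul_sub_dotProduct_add_add_smul_dotProduct, ← hax, Fin.sum_univ_succ]; rfl
  have hα : π α = 0 := by rw [map_mul, map_sub π 1, map_one, hlift b₀ hb₀, sub_self, mul_zero]
  obtain ⟨c, z, hcz⟩ := h.exists_add_smul_dotProduct_eq_one (t := 1)
    (by rw [mul_one]; exact mul_mul_sub_dotProduct_add_dotProduct_eq_one hv y₀)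
  have hb : ∀ i, π ((b₀ + α • c) i) = bb i := fun i => by simp [hα, hb₀]
  have hw : v + (a 0 * α) • c = Fin.tail a + a 0 • (b₀ + α • c) := by
    rw [smul_add, mul_smul, add_assoc]
  obtain ⟨y, hy, hwy⟩ := exists_lift_dotProduct_eq_one π (hw ▸ hcz) (hlift _ hb)
  exact ⟨b₀ + α • c, y, hb, fun i => (hy i).trans (hy₀ i), hwy⟩
end

section
/- If R is the inverse limit of a sequence (R_n) of unital rings with surjective connecting homomorphisms and bsr(R_n) ≤ d for all n, then bsr(R) ≤ d. -/
/-- The inverse limit of a sequence of unital rings along unital connecting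
homomorphisms, realized as the subring of coherent strings in the product. -/
def invLim (R : ℕ → Type*) [∀ n, Ring (R n)]
    (π : ∀ n, R (n + 1) →+* R n) : Subring (∀ n, R n) where
  carrier := {x | ∀ n, π n (x (n + 1)) = x n}
  zero_mem' := by intro n; simp
  one_mem' := by intro n; simp
  add_mem' := by intro a b ha hb n; simp [ha n, hb n]
  mul_mem' := by intro a b ha hb n; simp [ha n, hb n]
  neg_mem' := by intro a ha n; simp [ha n]

lemma lift_step {S T : Type*} [Ring S] [Ring T] (φ : S →+* T)
    (hφ : Function.Surjective φ) {d m : ℕ} (hS : BsrLe S d) (hm : d ≤ m)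
    (a x : Fin (m + 1) → S) (hx : ∑ i : Fin (m+1), a i * x i = 1)
    (b y : Fin m → T)
    (hby : ∑ i : Fin m, (φ (a i.succ) + φ (a 0) * b i) * y i = 1) :
    ∃ B Y : Fin m → S, (∀ i, φ (B i) = b i) ∧ (∀ i, φ (Y i) = y i) ∧
      ∑ i : Fin m, (a i.succ + a 0 * B i) * Y i = 1 := by
  classical
  choose b' hb' using fun i => hφ (b i)
  choose y' hy' using fun i => hφ (y i)
  set a' : Fin m → S := fun i => a i.succ + a 0 * b' i with ha'
  set u0 : S := x 0 - ∑ i : Fin m, b' i * x i.succ with hu0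
  have hx' : a 0 * x 0 + ∑ i : Fin m, a i.succ * x i.succ = 1 := by
    rw [← hx, Fin.sum_univ_succ]
  have hu : a 0 * u0 + ∑ i : Fin m, a' i * x i.succ = 1 := by
    simp only [ha', hu0, mul_sub, Finset.mul_sum, add_mul, Finset.sum_add_distrib, mul_assoc]
    rw [← hx']
    abel
  set k : S := 1 - ∑ i : Fin m, a' i * y' i with hk
  have hφk : φ k = 0 := by
    simp only [hk, map_sub, map_sum, map_one, map_mul, map_add, ha', hb', hy', hby, sub_self]
  set A : S := a 0 * (u0 * k) with hA
  have hsum2 : ∑ i : Fin m, a' i * x i.succ = 1 - a 0 * u0 := by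
    rw [← hu]; abel
  have hr : ∑ i : Fin (m+1), (Fin.cases A a' : Fin (m+1) → S) i *
      (Fin.cases 1 (fun i => y' i + x i.succ * k) : Fin (m+1) → S) i = 1 := by
    rw [Fin.sum_univ_succ]
    simp only [Fin.cases_zero, Fin.cases_succ, mul_add, Finset.sum_add_distrib,
      ← mul_assoc, ← Finset.sum_mul, hsum2]
    have hsy : ∑ i : Fin m, a' i * y' i = 1 - k := by rw [hk]; abel
    rw [hsy, hA]
    noncomm_ring
  obtain ⟨c, z, hcz⟩ := hS m hm _ ⟨_, hr⟩
  simp only [Fin.cases_zero, Fin.cases_succ] at hcz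
  set K : S := 1 - ∑ j : Fin m, (a' j + A * c j) * y' j with hK
  have hφK : φ K = 0 := by
    have h1 : ∀ j, φ ((a' j + A * c j) * y' j) = (φ (a j.succ) + φ (a 0) * b j) * y j := by
      intro j
      simp [ha', hA, hφk, hb', hy', mul_add, add_mul]
    simp only [hK, map_sub, map_one, map_sum, h1, hby, sub_self]
  refine ⟨fun i => b' i + u0 * k * c i, fun i => y' i + z i * K, ?_, ?_, ?_⟩
  · intro i; simp [hb', hφk]
  · intro i; simp [hy', hφK]
  · have hv : ∀ i : Fin m, a i.succ + a 0 * (b' i + u0 * k * c i) = a' i + A * c i := by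
      intro i; simp only [ha', hA]; noncomm_ring
    calc ∑ i : Fin m, (a i.succ + a 0 * (b' i + u0 * k * c i)) * (y' i + z i * K)
        = ∑ i : Fin m, ((a' i + A * c i) * y' i + (a' i + A * c i) * z i * K) := by
          refine Finset.sum_congr rfl fun i _ => ?_
          rw [hv i, mul_add, ← mul_assoc]
      _ = (∑ i : Fin m, (a' i + A * c i) * y' i) + (∑ i : Fin m, (a' i + A * c i) * z i) * K := by
          rw [Finset.sum_add_distrib, Finset.sum_mul]
      _ = 1 := by rw [hcz, one_mul, hK]; abel

/-- A surjective inverse limit of rings of Bass stable rank at most `d` has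
Bass stable rank at most `d`. -/
theorem stmt6 (R : ℕ → Type*) [∀ n, Ring (R n)]
    (π : ∀ n, R (n + 1) →+* R n)
    (hsurj : ∀ n, Function.Surjective (π n))
    (d : ℕ) (h : ∀ n, BsrLe (R n) d) :
    BsrLe ↥(invLim R π) d := by
  classical
  intro m hm a ha
  obtain ⟨x, hx⟩ := ha
  have coh : ∀ (r : invLim R π) (n : ℕ), π n ((r : ∀ k, R k) (n + 1)) = (r : ∀ k, R k) n :=
    fun r n => r.2 n
  have hxn : ∀ n : ℕ, ∑ i, ((a i : ∀ k, R k) n) * ((x i : ∀ k, R k) n) = 1 := by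
    intro n
    have := congrArg (fun r : invLim R π => (r : ∀ k, R k) n) hx
    simpa using this
  -- the type of solutions at level n
  let P : ℕ → Type _ := fun n => {p : (Fin m → R n) × (Fin m → R n) //
    ∑ i : Fin m, ((a i.succ : ∀ k, R k) n + (a 0 : ∀ k, R k) n * p.1 i) * p.2 i = 1}
  have base : P 0 := by
    have hE := h 0 m hm (fun i => (a i : ∀ k, R k) 0)
      ⟨fun i => (x i : ∀ k, R k) 0, hxn 0⟩
    exact ⟨(hE.choose, hE.choose_spec.choose), hE.choose_spec.choose_spec⟩
  have step : ∀ n : ℕ, ∀ p : P n,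
      {q : P (n + 1) // ∀ i, π n (q.1.1 i) = p.1.1 i ∧ π n (q.1.2 i) = p.1.2 i} := by
    intro n p
    have hby : ∑ i : Fin m, (π n ((a i.succ : ∀ k, R k) (n + 1)) +
        π n ((a 0 : ∀ k, R k) (n + 1)) * p.1.1 i) * p.1.2 i = 1 := by
      simp only [coh]
      exact p.2
    have hlift := lift_step (π n) (hsurj n) (h (n + 1)) hm
      (fun i => (a i : ∀ k, R k) (n + 1)) (fun i => (x i : ∀ k, R k) (n + 1)) (hxn (n + 1))
      p.1.1 p.1.2 hby
    exact ⟨⟨(hlift.choose, hlift.choose_spec.choose), hlift.choose_spec.choose_spec.2.2⟩,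
      fun i => ⟨hlift.choose_spec.choose_spec.1 i, hlift.choose_spec.choose_spec.2.1 i⟩⟩
  let F : ∀ n : ℕ, P n := fun n => Nat.rec base (fun n p => (step n p).1) n
  have hF : ∀ n : ℕ, F (n + 1) = (step n (F n)).1 := fun n => rfl
  have hBmem : ∀ i : Fin m, (fun n => (F n).1.1 i) ∈ invLim R π := by
    intro i n
    exact ((step n (F n)).2 i).1
  have hYmem : ∀ i : Fin m, (fun n => (F n).1.2 i) ∈ invLim R π := by
    intro i n
    exact ((step n (F n)).2 i).2
  refine ⟨fun i => ⟨_, hBmem i⟩, fun i => ⟨_, hYmem i⟩, ?_⟩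
  apply Subtype.ext
  funext n
  simp only [AddSubmonoidClass.coe_finset_sum, Finset.sum_apply, MulMemClass.coe_mul,
    Pi.mul_apply, AddMemClass.coe_add, Pi.add_apply, OneMemClass.coe_one, Pi.one_apply]
  exact (F n).2
end

section
/- If R is the inverse limit of a sequence (R_n) of unital rings with surjective connecting homomorphisms, then bsr(R) = sup_n bsr(R_n). -/
open Finset


/-- The Bass stable rank of a unital ring, with value `⊤` if no finite bound
exists. -/
noncomputable def bsr (R : Type*) [Ring R] : ℕ∞ :=
  sInf ((fun d : ℕ => (d : ℕ∞)) '' {d | BsrLe R d})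



lemma bsrle_mono {R : Type*} [Ring R] {d d' : ℕ} (h : BsrLe R d) (hdd : d ≤ d') : BsrLe R d' :=
  fun m hm => h m (hdd.trans hm)

lemma bsr_le_iff (R : Type*) [Ring R] (d : ℕ) : bsr R ≤ (d : ℕ∞) ↔ BsrLe R d := by
  constructor
  · intro h
    rcases Set.eq_empty_or_nonempty {e | BsrLe R e} with hS | hS
    · exfalso
      rw [bsr, hS] at h
      simp at h
    · have hcoe : ((sInf {e | BsrLe R e} : ℕ) : ℕ∞) = bsr R := by
        rw [bsr]; exact WithTop.coe_sInf' hS (OrderBot.bddBelow _)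
      have hmem : BsrLe R (sInf {e | BsrLe R e}) := Nat.sInf_mem hS
      have hle : (sInf {e | BsrLe R e}) ≤ d := by
        have := hcoe.le.trans h
        exact_mod_cast this
      exact bsrle_mono hmem hle
  · intro h
    exact sInf_le ⟨d, h, rfl⟩

lemma bsrle_of_surjective {S T : Type*} [Ring S] [Ring T] (φ : S →+* T)
    (hφ : Function.Surjective φ) {d : ℕ} (h : BsrLe S d) : BsrLe T d := by
  intro m hm a ⟨x, hx⟩
  choose A hA using fun i => hφ (a i)
  choose X hX using fun i => hφ (x i)
  set κ : S := 1 - ∑ i, A i * X i with hκ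
  have hκ0 : φ κ = 0 := by
    simp [hκ, map_sub, map_sum, hA, hX, hx]
  -- row of length m+2
  obtain ⟨b, y, hby⟩ := h (m + 1) (hm.trans (Nat.le_succ m)) (Fin.cons κ A)
    ⟨Fin.cons 1 X, by simp [Fin.sum_univ_succ, hκ]⟩
  simp only [Fin.cons_succ, Fin.cons_zero] at hby
  -- shortened row A' lifts a and is unimodular
  obtain ⟨B, Y, hBY⟩ := h m hm (fun i => A i + κ * b i) ⟨y, hby⟩
  refine ⟨fun i => φ (B i), fun i => φ (Y i), ?_⟩
  have := congrArg φ hBY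
  simpa [map_sum, map_add, map_mul, hκ0, hA] using this

lemma lift_reduction {S T : Type*} [Ring S] [Ring T] (φ : S →+* T)
    (hφ : Function.Surjective φ) {d m : ℕ} (hS : BsrLe S d) (hdm : d ≤ m)
    (a x : Fin (m + 1) → S) (hx : ∑ i, a i * x i = 1)
    (b y : Fin m → T)
    (hby : ∑ i, (φ (a i.succ) + φ (a 0) * b i) * y i = 1) :
    ∃ B Y : Fin m → S, (∀ i, φ (B i) = b i) ∧ (∀ i, φ (Y i) = y i) ∧
      ∑ i, (a i.succ + a 0 * B i) * Y i = 1 := by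
  choose bt hbt using fun i => hφ (b i)
  choose yt hyt using fun i => hφ (y i)
  set v : Fin m → S := fun i => a i.succ + a 0 * bt i with hv
  set k : S := 1 - ∑ i, v i * yt i with hk
  have hφk : φ k = 0 := by
    simp [hk, hv, map_sub, map_sum, map_add, map_mul, hbt, hyt, hby]
  set s : S := x 0 - ∑ i, bt i * x i.succ with hs
  have h1 : a 0 * s + ∑ i, v i * x i.succ = 1 := by
    rw [← hx, Fin.sum_univ_succ]
    simp only [hv, hs, mul_sub, Finset.mul_sum, add_mul, Finset.sum_add_distrib, mul_assoc]
    abel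
  have huni : ∑ i, (Fin.cons (a 0 * (s * k)) v : Fin (m+1) → S) i *
      (Fin.cons 1 (fun i => yt i + x i.succ * k) : Fin (m+1) → S) i = 1 := by
    rw [Fin.sum_univ_succ]
    simp only [Fin.cons_succ, Fin.cons_zero, mul_one, mul_add, Finset.sum_add_distrib]
    have e1 : ∑ i, v i * (x i.succ * k) = (∑ i, v i * x i.succ) * k := by
      rw [Finset.sum_mul]; simp [mul_assoc]
    have e2 : a 0 * (s * k) = (a 0 * s) * k := (mul_assoc _ _ _).symm
    rw [e1, e2]
    have h3 : (∑ i, v i * x i.succ) * k + a 0 * s * k = k := by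
      rw [add_comm, ← add_mul, h1, one_mul]
    have h4 : a 0 * s * k + (∑ x : Fin m, v x * yt x + (∑ i, v i * x i.succ) * k) =
        (∑ x : Fin m, v x * yt x) + ((∑ i, v i * x i.succ) * k + a 0 * s * k) := by abel
    rw [h4, h3]
    simp [hk]
  obtain ⟨p, q, hpq⟩ := hS m hdm (Fin.cons (a 0 * (s * k)) v)
    ⟨Fin.cons 1 (fun i => yt i + x i.succ * k), huni⟩
  simp only [Fin.cons_succ, Fin.cons_zero] at hpq
  set B : Fin m → S := fun i => bt i + s * k * p i with hB
  have hwB : ∀ i, a i.succ + a 0 * B i = v i + a 0 * (s * k) * p i := by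
    intro i; simp [hB, hv, mul_add, mul_assoc, add_assoc]
  have hq1 : ∑ i, (a i.succ + a 0 * B i) * q i = 1 := by
    rw [← hpq]; exact Finset.sum_congr rfl fun i _ => by rw [hwB]
  set k' : S := 1 - ∑ i, (a i.succ + a 0 * B i) * yt i with hk'
  have hφB : ∀ i, φ (B i) = b i := by
    intro i; simp [hB, map_add, map_mul, hφk, hbt]
  have hφk' : φ k' = 0 := by
    simp [hk', map_sub, map_sum, map_add, map_mul, hφB, hyt, hby]
  refine ⟨B, fun i => yt i + q i * k', hφB, fun i => by simp [map_add, map_mul, hφk', hyt], ?_⟩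
  simp only [mul_add, Finset.sum_add_distrib]
  have : ∑ i, (a i.succ + a 0 * B i) * (q i * k') = (∑ i, (a i.succ + a 0 * B i) * q i) * k' := by
    rw [Finset.sum_mul]; simp [mul_assoc]
  rw [this, hq1, one_mul, hk']
  abel

section InvLim
variable (R : ℕ → Type*) [∀ n, Ring (R n)] (π : ∀ n, R (n + 1) →+* R n)

/-- The composite of the connecting maps from level `b` down to level `a`. -/
def chainDown {a b : ℕ} (h : a ≤ b) : R b → R a :=
  Nat.leRecOn h (fun {k} f => f ∘ π k) id

lemma chainDown_self {a : ℕ} (h : a ≤ a) : chainDown R π h = id :=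
  Nat.leRecOn_self _

lemma chainDown_succ {a b : ℕ} (h : a ≤ b) (h' : a ≤ b + 1) (z : R (b + 1)) :
    chainDown R π h' z = chainDown R π h (π b z) := by
  have := Nat.leRecOn_succ (C := fun k => R k → R a) h (h2 := h')
    (next := fun {k} f => f ∘ π k) id
  exact congrFun this z

lemma pi_chainDown {a b : ℕ} (h : a + 1 ≤ b) : ∀ (h' : a ≤ b) (z : R b),
    π a (chainDown R π h z) = chainDown R π h' z := by
  induction b, h using Nat.le_induction with
  | base =>
      intro h' z
      rw [chainDown_self, chainDown_succ R π (le_refl a) h' z, chainDown_self]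
      rfl
  | succ b hb ih =>
      intro h' z
      rw [chainDown_succ R π hb (Nat.le_succ_of_le hb) z, chainDown_succ R π (Nat.le_of_succ_le hb) h' z]
      exact ih _ _

/-- evaluation at level `n` as a ring hom from the inverse limit -/
def ev (n : ℕ) : ↥(invLim R π) →+* R n :=
  (Pi.evalRingHom R n).comp (invLim R π).subtype

lemma ev_surj (hsurj : ∀ n, Function.Surjective (π n)) (n : ℕ) :
    Function.Surjective (ev R π n) := by
  intro r
  let u : ∀ m, R (n + m) := fun m => Nat.rec r (fun m z => (hsurj (n + m) z).choose) m
  have hu : ∀ m, π (n + m) (u (m + 1)) = u m := fun m => (hsurj (n + m) (u m)).choose_spec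
  have hmem : (fun l => chainDown R π (Nat.le_add_left l n) (u l)) ∈ invLim R π := by
    intro l
    rw [pi_chainDown R π (Nat.le_add_left (l+1) n) (by omega) (u (l+1)),
      chainDown_succ R π (Nat.le_add_left l n) _ (u (l+1)), hu]
  refine ⟨⟨fun l => chainDown R π (Nat.le_add_left l n) (u l), hmem⟩, ?_⟩
  show chainDown R π (Nat.le_add_left n n) (u n) = r
  have key : ∀ m (h : n ≤ n + m), chainDown R π h (u m) = r := by
    intro m
    induction m with
    | zero => intro h; rw [chainDown_self]; rfl
    | succ m ih =>
        intro h
        rw [chainDown_succ R π (Nat.le_add_right n m) h (u (m+1)), hu]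
        exact ih _
  exact key n _

set_option maxHeartbeats 1000000 in
set_option synthInstance.maxHeartbeats 200000 in
lemma bsrle_invLim (hsurj : ∀ n, Function.Surjective (π n)) {d : ℕ}
    (h : ∀ n, BsrLe (R n) d) : BsrLe (↥(invLim R π)) d := by
  intro m hm A hA
  obtain ⟨X, hX⟩ := hA
  have hXn : ∀ n, ∑ i, ev R π n (A i) * ev R π n (X i) = 1 := by
    intro n
    have := congrArg (ev R π n) hX
    simpa [map_sum, map_mul] using this
  have hcompat : ∀ (z : ↥(invLim R π)) n, π n (ev R π (n + 1) z) = ev R π n z :=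
    fun z n => z.2 n
  have key : ∀ n (bb yy : Fin m → R n),
      (∑ i, (ev R π n (A i.succ) + ev R π n (A 0) * bb i) * yy i = 1) →
      ∃ p : (Fin m → R (n + 1)) × (Fin m → R (n + 1)),
        (∀ i, π n (p.1 i) = bb i) ∧ (∀ i, π n (p.2 i) = yy i) ∧
        ∑ i, (ev R π (n + 1) (A i.succ) + ev R π (n + 1) (A 0) * p.1 i) * p.2 i = 1 := by
    intro n bb yy hred
    obtain ⟨B, Y, h1, h2, h3⟩ := lift_reduction (π n) (hsurj n) (h (n + 1)) hm
      (fun i => ev R π (n + 1) (A i)) (fun i => ev R π (n + 1) (X i)) (hXn (n + 1)) bb yy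
      (by simpa only [hcompat] using hred)
    exact ⟨(B, Y), h1, h2, h3⟩
  obtain ⟨b0, y0, h0⟩ := h 0 m hm (fun i => ev R π 0 (A i)) ⟨fun i => ev R π 0 (X i), hXn 0⟩
  let T : ℕ → Type _ := fun n => { p : (Fin m → R n) × (Fin m → R n) //
      ∑ i, (ev R π n (A i.succ) + ev R π n (A 0) * p.1 i) * p.2 i = 1 }
  let F : ∀ n, T n := fun n => Nat.rec (⟨(b0, y0), h0⟩ : T 0)
    (fun n t => ⟨(key n t.1.1 t.1.2 t.2).choose, (key n t.1.1 t.1.2 t.2).choose_spec.2.2⟩) n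
  have hFb : ∀ n i, π n ((F (n + 1)).1.1 i) = (F n).1.1 i := fun n i =>
    (key n (F n).1.1 (F n).1.2 (F n).2).choose_spec.1 i
  have hFy : ∀ n i, π n ((F (n + 1)).1.2 i) = (F n).1.2 i := fun n i =>
    (key n (F n).1.1 (F n).1.2 (F n).2).choose_spec.2.1 i
  let BB : Fin m → ↥(invLim R π) := fun i => ⟨fun n => (F n).1.1 i, fun n => hFb n i⟩
  let YY : Fin m → ↥(invLim R π) := fun i => ⟨fun n => (F n).1.2 i, fun n => hFy n i⟩
  refine ⟨BB, YY, ?_⟩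
  apply Subtype.ext
  funext n
  show ev R π n (∑ i, (A i.succ + A 0 * BB i) * YY i) = 1
  rw [map_sum]
  simp only [map_add, map_mul]
  exact (F n).2

end InvLim

/-- For a surjective inverse limit, `bsr (lim R_n) = sup_n bsr (R_n)`. -/
theorem stmt7 (R : ℕ → Type*) [∀ n, Ring (R n)]
    (π : ∀ n, R (n + 1) →+* R n)
    (hsurj : ∀ n, Function.Surjective (π n)) :
    bsr ↥(invLim R π) = ⨆ n, bsr (R n) := by

  apply le_antisymm
  · rcases eq_or_ne (⨆ n, bsr (R n)) ⊤ with hc | hc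
    · rw [hc]; exact le_top
    · obtain ⟨d, hd⟩ := WithTop.ne_top_iff_exists.mp hc
      have hn : ∀ n, BsrLe (R n) d := by
        intro n
        rw [← bsr_le_iff]
        exact le_trans (le_iSup (fun n => bsr (R n)) n) (le_of_eq hd.symm)
      rw [← hd]
      exact (bsr_le_iff _ d).mpr (bsrle_invLim R π hsurj hn)
  · apply iSup_le
    intro n
    rcases eq_or_ne (bsr ↥(invLim R π)) ⊤ with hc | hc
    · rw [hc]; exact le_top
    · obtain ⟨d, hd⟩ := WithTop.ne_top_iff_exists.mp hc
      have h1 : BsrLe (↥(invLim R π)) d := (bsr_le_iff _ d).mp (le_of_eq hd.symm)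
      have h2 : BsrLe (R n) d := bsrle_of_surjective (ev R π n) (ev_surj R π hsurj n) h1
      calc bsr (R n) ≤ (d : ℕ∞) := (bsr_le_iff _ d).mpr h2
        _ = bsr _ := hd
end

section
/- Let 0 → I → R → S → 0 be a short exact sequence of rings. If both I and S are σ-unital, then R is σ-unital. -/
/-- A ring is σ-unital if it has a countable approximate unit: a sequence
`(e n)` such that for each `x` eventually `e n * x = x = x * e n`. -/
def SigmaUnital (R : Type*) [NonUnitalRing R] : Prop :=
  ∃ e : ℕ → R, ∀ x : R, ∃ N, ∀ n, N ≤ n → e n * x = x ∧ x * e n = x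

/-- The kernel of a (non-unital) ring homomorphism, as a non-unital subring. -/
def krn {R S : Type*} [NonUnitalRing R] [NonUnitalRing S] (π : R →ₙ+* S) :
    NonUnitalSubring R where
  carrier := {x | π x = 0}
  zero_mem' := by simp
  add_mem' := by intro a b ha hb; simp only [Set.mem_setOf_eq] at *; simp [ha, hb]
  mul_mem' := by intro a b ha hb; simp only [Set.mem_setOf_eq] at *; simp [ha, hb]
  neg_mem' := by intro a ha; simp only [Set.mem_setOf_eq] at *; simp [ha]

/-- In a short exact sequence `0 → I → R → S → 0` of rings, if `I` and `S` are
σ-unital then so is `R`. -/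
theorem stmt10 {R S : Type*} [NonUnitalRing R] [NonUnitalRing S]
    (π : R →ₙ+* S) (hsurj : Function.Surjective π)
    (hI : SigmaUnital ↥(krn π)) (hS : SigmaUnital S) :
    SigmaUnital R := by
  classical
  obtain ⟨g, hg⟩ := hS
  obtain ⟨f', hf'⟩ := hI
  choose u hu using fun n => hsurj (g n)
  set f : ℕ → R := fun n => (f' n : R) with hfdef
  have hf0 : ∀ n, π (f n) = 0 := fun n => (f' n).2
  have hf : ∀ z : R, π z = 0 → ∃ N, ∀ q, N ≤ q → f q * z = z ∧ z * f q = z := by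
    intro z hz
    obtain ⟨N, hN⟩ := hf' ⟨z, hz⟩
    refine ⟨N, fun q hq => ⟨?_, ?_⟩⟩
    · exact congrArg Subtype.val ((hN q hq).1)
    · exact congrArg Subtype.val ((hN q hq).2)
  let T : R → ℕ := fun z => if h : π z = 0 then (hf z h).choose else 0
  have hT : ∀ z (hz : π z = 0) (q : ℕ), T z ≤ q → f q * z = z ∧ z * f q = z := by
    intro z hz q hq
    have hTz : T z = (hf z hz).choose := dif_pos hz
    exact (hf z hz).choose_spec q (hTz ▸ hq)
  let T4 : ℕ → ℕ → ℕ := fun n m =>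
    max (max (T (u n * u m - u m)) (T (u m * u n - u m)))
        (max (T (u n * f m)) (T (f m * u n)))
  let K : ℕ → ℕ := fun n => max n ((Finset.range (n + 1)).sup (T4 n))
  have hKn : ∀ n, n ≤ K n := fun n => le_max_left _ _
  have hK4 : ∀ n m, m ≤ n → T4 n m ≤ K n := fun n m hm =>
    le_trans (Finset.le_sup (Finset.mem_range.2 (Nat.lt_succ_of_le hm))) (le_max_right _ _)
  refine ⟨fun n => (f (K n) + u n - f (K n) * u n) + (u n + f (K n) - u n * f (K n))
      - (u n + f (K n) - u n * f (K n)) * (f (K n) + u n - f (K n) * u n), ?_⟩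
  intro x
  obtain ⟨m, hm⟩ := hg (π x)
  obtain ⟨m₁, hm₁⟩ := hg (g m)
  have hzl : π (x - u m * x) = 0 := by
    rw [map_sub, map_mul, hu m, (hm m le_rfl).1, sub_self]
  have hzr : π (x - x * u m) = 0 := by
    rw [map_sub, map_mul, hu m, (hm m le_rfl).2, sub_self]
  set z : R := x - u m * x with hz_def
  set z' : R := x - x * u m with hz'_def
  refine ⟨max (max m m₁) (max (T z) (T z')), fun n hn => ?_⟩
  have hnm : m ≤ n := le_trans (le_trans (le_max_left _ _) (le_max_left _ _)) hn
  have hnm1 : m₁ ≤ n := le_trans (le_trans (le_max_right _ _) (le_max_left _ _)) hn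
  have hnp : T z ≤ n := le_trans (le_trans (le_max_left _ _) (le_max_right _ _)) hn
  have hnp' : T z' ≤ n := le_trans (le_trans (le_max_right _ _) (le_max_right _ _)) hn
  set F : R := f (K n) with hF_def
  set U : R := u n with hU_def
  -- LEFT: F * (x - U * x) = x - U * x
  have hleft : F * (x - U * x) = x - U * x := by
    -- decomposition
    have hdecomp : x - U * x = (z - U * z) - (U * u m - u m) * x := by
      rw [hz_def]; noncomm_ring
    -- piece 1 : F * z = z
    have h1 : F * z = z := (hT z hzl (K n) (le_trans hnp (hKn n))).1
    -- piece 2 : F * (U * z) = U * z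
    have hzfix : f (T z) * z = z := (hT z hzl (T z) le_rfl).1
    have hcπ : π (u n * f (T z)) = 0 := by
      rw [map_mul, hf0, mul_zero]
    have hcT : T (u n * f (T z)) ≤ K n :=
      le_trans (le_trans (le_max_left _ _) (le_max_right _ _)) (hK4 n (T z) hnp)
    have hc : f (K n) * (u n * f (T z)) = u n * f (T z) := (hT _ hcπ (K n) hcT).1
    have h2 : F * (U * z) = U * z := by
      calc F * (U * z) = F * (U * (f (T z) * z)) := by rw [hzfix]
        _ = (f (K n) * (u n * f (T z))) * z := by
            rw [hF_def, hU_def]; noncomm_ring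
        _ = (u n * f (T z)) * z := by rw [hc]
        _ = U * z := by rw [hU_def, mul_assoc, hzfix]
    -- piece 3 : F * ((U * u m - u m) * x) = (U * u m - u m) * x
    have hwπ : π (u n * u m - u m) = 0 := by
      rw [map_sub, map_mul, hu, hu, (hm₁ n hnm1).1, sub_self]
    have hwT : T (u n * u m - u m) ≤ K n :=
      le_trans (le_trans (le_max_left _ _) (le_max_left _ _)) (hK4 n m hnm)
    have hw : f (K n) * (u n * u m - u m) = u n * u m - u m := (hT _ hwπ (K n) hwT).1
    have h3 : F * ((U * u m - u m) * x) = (U * u m - u m) * x := by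
      rw [hF_def, hU_def, ← mul_assoc, hw]
    rw [hdecomp, mul_sub, mul_sub, h1, h2, h3]
  -- RIGHT: (x - x * U) * F = x - x * U
  have hright : (x - x * U) * F = x - x * U := by
    have hdecomp : x - x * U = (z' - z' * U) - x * (u m * U - u m) := by
      rw [hz'_def]; noncomm_ring
    have h1 : z' * F = z' := (hT z' hzr (K n) (le_trans hnp' (hKn n))).2
    have hzfix : z' * f (T z') = z' := (hT z' hzr (T z') le_rfl).2
    have hcπ : π (f (T z') * u n) = 0 := by
      rw [map_mul, hf0, zero_mul]
    have hcT : T (f (T z') * u n) ≤ K n :=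
      le_trans (le_trans (le_max_right _ _) (le_max_right _ _)) (hK4 n (T z') hnp')
    have hc : (f (T z') * u n) * f (K n) = f (T z') * u n := (hT _ hcπ (K n) hcT).2
    have h2 : (z' * U) * F = z' * U := by
      calc (z' * U) * F = ((z' * f (T z')) * U) * F := by rw [hzfix]
        _ = z' * ((f (T z') * u n) * f (K n)) := by
            rw [hF_def, hU_def]; noncomm_ring
        _ = z' * (f (T z') * u n) := by rw [hc]
        _ = z' * U := by rw [hU_def, ← mul_assoc, hzfix]
    have hwπ : π (u m * u n - u m) = 0 := by
      rw [map_sub, map_mul, hu, hu, (hm₁ n hnm1).2, sub_self]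
    have hwT : T (u m * u n - u m) ≤ K n :=
      le_trans (le_trans (le_max_right _ _) (le_max_left _ _)) (hK4 n m hnm)
    have hw : (u m * u n - u m) * f (K n) = u m * u n - u m := (hT _ hwπ (K n) hwT).2
    have h3 : (x * (u m * U - u m)) * F = x * (u m * U - u m) := by
      rw [hF_def, hU_def, mul_assoc, hw]
    rw [hdecomp, sub_mul, sub_mul, h1, h2, h3]
  -- assemble
  have hA : (F + U - F * U) * x = x := by
    have h' : F * x - F * (U * x) = x - U * x := by rw [← mul_sub]; exact hleft
    have hexp : (F + U - F * U) * x = (F * x - F * (U * x)) + U * x := by noncomm_ring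
    rw [hexp, h']; noncomm_ring
  have hB : x * (U + F - U * F) = x := by
    have h' : x * F - (x * U) * F = x - x * U := by rw [← sub_mul]; exact hright
    have hexp : x * (U + F - U * F) = (x * F - (x * U) * F) + x * U := by noncomm_ring
    rw [hexp, h']; noncomm_ring
  constructor
  · -- e * x = x
    have : ((F + U - F * U) + (U + F - U * F) - (U + F - U * F) * (F + U - F * U)) * x
        = (F + U - F * U) * x + (U + F - U * F) * x
          - (U + F - U * F) * ((F + U - F * U) * x) := by noncomm_ring
    rw [this, hA]
    noncomm_ring
  · -- x * e = x
    have : x * ((F + U - F * U) + (U + F - U * F) - (U + F - U * F) * (F + U - F * U))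
        = x * (F + U - F * U) + x * (U + F - U * F)
          - (x * (U + F - U * F)) * (F + U - F * U) := by noncomm_ring
    rw [this, hB]
    noncomm_ring
end

section
/- Let R = lim← R_n be the inverse limit of a sequence of rings with surjective connecting homomorphisms, and let ρ_n : R → R_n be the coordinate evaluations. Then R is σ-unital if and only if each R_n is σ-unital and there exists m such that ker ρ_m has a unit in R (i.e. there is e ∈ R with ex = xe = x for all x ∈ ker ρ_m). -/
section Aux

variable {R : ℕ → Type*} [∀ n, NonUnitalRing (R n)] (π : ∀ n, R (n + 1) →ₙ+* R n)

lemma invLim_mul_apply (a b : ↥(invLimN R π)) (n : ℕ) :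
    ((a * b : ↥(invLimN R π)) : ∀ k, R k) n = (a : ∀ k, R k) n * (b : ∀ k, R k) n := rfl

lemma invLim_add_apply (a b : ↥(invLimN R π)) (n : ℕ) :
    ((a + b : ↥(invLimN R π)) : ∀ k, R k) n = (a : ∀ k, R k) n + (b : ∀ k, R k) n := rfl

lemma invLim_sub_apply (a b : ↥(invLimN R π)) (n : ℕ) :
    ((a - b : ↥(invLimN R π)) : ∀ k, R k) n = (a : ∀ k, R k) n - (b : ∀ k, R k) n := rfl

lemma invLim_compat (x : ↥(invLimN R π)) (n : ℕ) :
    π n ((x : ∀ k, R k) (n + 1)) = (x : ∀ k, R k) n := x.2 n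

lemma zero_below (x : ↥(invLimN R π)) :
    ∀ m, (x : ∀ k, R k) m = 0 → ∀ j, j ≤ m → (x : ∀ k, R k) j = 0 := by
  intro m
  induction m with
  | zero =>
      intro h0 j hj
      have : j = 0 := by omega
      rw [this, h0]
  | succ m ih =>
      intro h0 j hj
      have hm : (x : ∀ k, R k) m = 0 := by
        rw [← invLim_compat π x m, h0, map_zero]
      by_cases hj' : j ≤ m
      · exact ih hm j hj'
      · have : j = m + 1 := by omega
        rw [this, h0]

lemma exists_partial (n : ℕ) (r : R n) :
    ∃ v : ∀ j, R j, v n = r ∧ ∀ j, j < n → π j (v (j + 1)) = v j := by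
  induction n with
  | zero =>
      refine ⟨Function.update (fun j => (0 : R j)) 0 r, ?_, ?_⟩
      · simp
      · intro j hj; omega
  | succ n ih =>
      obtain ⟨v, hv1, hv2⟩ := ih (π n r)
      refine ⟨Function.update v (n + 1) r, ?_, ?_⟩
      · simp
      · intro j hj
        by_cases hjn : j = n
        · subst hjn
          rw [Function.update_self, Function.update_of_ne (by omega), hv1]
        · rw [Function.update_of_ne (by omega), Function.update_of_ne (by omega)]
          exact hv2 j (by omega)

private noncomputable def secSeq {R : ℕ → Type*} [∀ n, NonUnitalRing (R n)]
    (π : ∀ n, R (n + 1) →ₙ+* R n) (hsurj : ∀ n, Function.Surjective (π n))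
    (n : ℕ) (v : ∀ j, R j) : ∀ j, R j
  | 0 => v 0
  | (j + 1) => if j + 1 ≤ n then v (j + 1) else (hsurj j (secSeq π hsurj n v j)).choose

lemma secSeq_le (hsurj : ∀ n, Function.Surjective (π n)) (n : ℕ) (v : ∀ j, R j) : ∀ j, j ≤ n → secSeq π hsurj n v j = v j := by
  intro j
  induction j with
  | zero => intro _; rfl
  | succ j ih =>
      intro h
      simp only [secSeq, if_pos h]

lemma exists_lim_eval (hsurj : ∀ n, Function.Surjective (π n)) (n : ℕ) (r : R n) :
    ∃ x : ↥(invLimN R π), (x : ∀ j, R j) n = r := by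
  obtain ⟨v, hv1, hv2⟩ := exists_partial π n r
  refine ⟨⟨secSeq π hsurj n v, ?_⟩, ?_⟩
  · intro j
    by_cases h : j + 1 ≤ n
    · have e1 : secSeq π hsurj n v (j + 1) = v (j + 1) := secSeq_le π hsurj n v _ h
      have e2 : secSeq π hsurj n v j = v j := secSeq_le π hsurj n v _ (by omega)
      rw [e1, e2]
      exact hv2 j (by omega)
    · show π j (secSeq π hsurj n v (j + 1)) = _
      simp only [secSeq, if_neg h]
      exact (hsurj j (secSeq π hsurj n v j)).choose_spec
  · show secSeq π hsurj n v n = r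
    rw [secSeq_le π hsurj n v n le_rfl, hv1]

lemma sigma_coord (hsurj : ∀ n, Function.Surjective (π n))
    (h : SigmaUnital ↥(invLimN R π)) (n : ℕ) : SigmaUnital (R n) := by
  obtain ⟨E, hE⟩ := h
  refine ⟨fun k => (E k : ∀ j, R j) n, fun r => ?_⟩
  obtain ⟨X, hX⟩ := exists_lim_eval π hsurj n r
  obtain ⟨N, hN⟩ := hE X
  refine ⟨N, fun k hk => ?_⟩
  obtain ⟨h1, h2⟩ := hN k hk
  constructor
  · have := congrArg (fun z : ↥(invLimN R π) => (z : ∀ j, R j) n) h1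
    simpa [invLim_mul_apply, hX] using this
  · have := congrArg (fun z : ↥(invLimN R π) => (z : ∀ j, R j) n) h2
    simpa [invLim_mul_apply, hX] using this

lemma converse_dir (hsurj : ∀ n, Function.Surjective (π n))
    (hall : ∀ n, SigmaUnital (R n)) (m : ℕ) (e : ↥(invLimN R π))
    (he : ∀ x : ↥(invLimN R π), (x : ∀ n, R n) m = 0 → e * x = x ∧ x * e = x) :
    SigmaUnital ↥(invLimN R π) := by
  obtain ⟨f, hf⟩ := hall m
  choose u hu using fun k => exists_lim_eval π hsurj m (f k)
  refine ⟨fun k => e + e + u k - e * e - e * u k - u k * e + e * (u k * e), fun x => ?_⟩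
  obtain ⟨N1, h1⟩ := hf (((x - e * x : ↥(invLimN R π)) : ∀ n, R n) m)
  obtain ⟨N2, h2⟩ := hf (((x - x * e : ↥(invLimN R π)) : ∀ n, R n) m)
  refine ⟨max N1 N2, fun k hk => ?_⟩
  set y : ↥(invLimN R π) := x - e * x with hy
  set z : ↥(invLimN R π) := x - x * e with hz
  have hw1m : ((u k * y - y : ↥(invLimN R π)) : ∀ n, R n) m = 0 := by
    have := (h1 k (le_trans (le_max_left _ _) hk)).1
    rw [invLim_sub_apply, invLim_mul_apply, hu k, this, sub_self]
  have hw2m : ((z * u k - z : ↥(invLimN R π)) : ∀ n, R n) m = 0 := by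
    have := (h2 k (le_trans (le_max_right _ _) hk)).2
    rw [invLim_sub_apply, invLim_mul_apply, hu k, this, sub_self]
  have hww1 := (he _ hw1m).1
  have hww2 := (he _ hw2m).2
  constructor
  · have key : (e + e + u k - e * e - e * u k - u k * e + e * (u k * e)) * x - x
        = (u k * y - y) - e * (u k * y - y) := by
      rw [hy]; noncomm_ring
    rw [hww1, sub_self] at key
    exact sub_eq_zero.mp key
  · have key : x * (e + e + u k - e * e - e * u k - u k * e + e * (u k * e)) - x
        = (z * u k - z) - (z * u k - z) * e := by
      rw [hz]; noncomm_ring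
    rw [hww2, sub_self] at key
    exact sub_eq_zero.mp key

private noncomputable def diag {L : Type*} [NonUnitalRing L] (E : ℕ → L)
    (bad : ℕ → L → L) (wit : L → L → ℕ) (Nfix : L → ℕ) : ℕ → ℕ × ℕ × L × L
  | 0 => (0, 0, bad 0 (E 0), bad 0 (E 0))
  | (i + 1) =>
      let p := diag E bad wit Nfix i
      let n := wit (E p.2.1) p.2.2.1
      let k := max (p.2.1 + 1) (Nfix p.2.2.2)
      (n + 1, k, bad (n + 1) (E k), p.2.2.2 + bad (n + 1) (E k))

section Diag
variable {L : Type*} [NonUnitalRing L] (E : ℕ → L)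
    (bad : ℕ → L → L) (wit : L → L → ℕ) (Nfix : L → ℕ)

private lemma diag_m_succ (i : ℕ) : (diag E bad wit Nfix (i + 1)).1
    = wit (E (diag E bad wit Nfix i).2.1) (diag E bad wit Nfix i).2.2.1 + 1 := rfl

private lemma diag_k_succ (i : ℕ) : (diag E bad wit Nfix (i + 1)).2.1
    = max ((diag E bad wit Nfix i).2.1 + 1) (Nfix (diag E bad wit Nfix i).2.2.2) := rfl

private lemma diag_x_succ (i : ℕ) : (diag E bad wit Nfix (i + 1)).2.2.1
    = bad (diag E bad wit Nfix (i + 1)).1 (E (diag E bad wit Nfix (i + 1)).2.1) := rfl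

private lemma diag_t_succ (i : ℕ) : (diag E bad wit Nfix (i + 1)).2.2.2
    = (diag E bad wit Nfix i).2.2.2 + (diag E bad wit Nfix (i + 1)).2.2.1 := rfl

private lemma diag_x_eq (i : ℕ) : (diag E bad wit Nfix i).2.2.1
    = bad (diag E bad wit Nfix i).1 (E (diag E bad wit Nfix i).2.1) := by
  cases i with
  | zero => rfl
  | succ i => exact diag_x_succ E bad wit Nfix i

end Diag

section DiagDefs
variable {L : Type*} [NonUnitalRing L] (E : ℕ → L)
    (bad : ℕ → L → L) (wit : L → L → ℕ) (Nfix : L → ℕ)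

private noncomputable def dm : ℕ → ℕ := fun i => (diag E bad wit Nfix i).1
private noncomputable def dk : ℕ → ℕ := fun i => (diag E bad wit Nfix i).2.1
private noncomputable def dx : ℕ → L := fun i => (diag E bad wit Nfix i).2.2.1
private noncomputable def dt : ℕ → L := fun i => (diag E bad wit Nfix i).2.2.2
private noncomputable def dn : ℕ → ℕ :=
  fun i => wit (E (dk E bad wit Nfix i)) (dx E bad wit Nfix i)

private lemma dm_zero : dm E bad wit Nfix 0 = 0 := rfl
private lemma dk_zero : dk E bad wit Nfix 0 = 0 := rfl
private lemma dt_zero : dt E bad wit Nfix 0 = dx E bad wit Nfix 0 := rfl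
private lemma dm_succ (i : ℕ) :
    dm E bad wit Nfix (i + 1) = dn E bad wit Nfix i + 1 := rfl
private lemma dk_succ (i : ℕ) :
    dk E bad wit Nfix (i + 1)
      = max (dk E bad wit Nfix i + 1) (Nfix (dt E bad wit Nfix i)) := rfl
private lemma dt_succ (i : ℕ) :
    dt E bad wit Nfix (i + 1) = dt E bad wit Nfix i + dx E bad wit Nfix (i + 1) := rfl
private lemma dx_eq (i : ℕ) :
    dx E bad wit Nfix i = bad (dm E bad wit Nfix i) (E (dk E bad wit Nfix i)) :=
  diag_x_eq E bad wit Nfix i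

end DiagDefs

lemma invLim_sum_apply {ι : Type*} (s : Finset ι) (g : ι → ↥(invLimN R π)) (n : ℕ) :
    ((∑ j ∈ s, g j : ↥(invLimN R π)) : ∀ k, R k) n
      = ∑ j ∈ s, (g j : ∀ k, R k) n := by
  rw [AddSubmonoidClass.coe_finset_sum, Finset.sum_apply]

lemma forward_ker (h : SigmaUnital ↥(invLimN R π)) :
    ∃ m, ∃ e : ↥(invLimN R π), ∀ x : ↥(invLimN R π),
      (x : ∀ n, R n) m = 0 → e * x = x ∧ x * e = x := by
  classical
  by_contra hcon
  push_neg at hcon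
  obtain ⟨E, hE⟩ := h
  choose Nfix hNfix using hE
  choose bad hbad0 hbadQ using hcon
  have hwit' : ∀ (e' X : ↥(invLimN R π)),
      ∃ n, (e' * X = X → ¬ X * e' = X) →
        (((e' * X : ↥(invLimN R π)) : ∀ k, R k) n ≠ (X : ∀ k, R k) n ∨
          ((X * e' : ↥(invLimN R π)) : ∀ k, R k) n ≠ (X : ∀ k, R k) n) := by
    intro e' X
    by_cases h1 : e' * X = X
    · by_cases h2 : X * e' = X
      · exact ⟨0, fun hq => absurd h2 (hq h1)⟩
      · have : ∃ n, ((X * e' : ↥(invLimN R π)) : ∀ k, R k) n ≠ (X : ∀ k, R k) n := by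
          by_contra hall
          push_neg at hall
          exact h2 (Subtype.ext (funext hall))
        obtain ⟨n, hn⟩ := this
        exact ⟨n, fun _ => Or.inr hn⟩
    · have : ∃ n, ((e' * X : ↥(invLimN R π)) : ∀ k, R k) n ≠ (X : ∀ k, R k) n := by
        by_contra hall
        push_neg at hall
        exact h1 (Subtype.ext (funext hall))
      obtain ⟨n, hn⟩ := this
      exact ⟨n, fun _ => Or.inl hn⟩
  choose wit hwit using hwit'
  let mm : ℕ → ℕ := dm E bad wit Nfix
  let kk : ℕ → ℕ := dk E bad wit Nfix
  let xx : ℕ → ↥(invLimN R π) := dx E bad wit Nfix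
  let tt : ℕ → ↥(invLimN R π) := dt E bad wit Nfix
  let nn : ℕ → ℕ := dn E bad wit Nfix
  have Hm0 : mm 0 = 0 := rfl
  have Hm : ∀ i, mm (i + 1) = nn i + 1 := fun i => dm_succ E bad wit Nfix i
  have Hk : ∀ i, kk (i + 1) = max (kk i + 1) (Nfix (tt i)) :=
    fun i => dk_succ E bad wit Nfix i
  have Ht : ∀ i, tt (i + 1) = tt i + xx (i + 1) := fun i => dt_succ E bad wit Nfix i
  have Hxeq : ∀ i, xx i = bad (mm i) (E (kk i)) := fun i => dx_eq E bad wit Nfix i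
  have Hx0 : ∀ i, (xx i : ∀ k, R k) (mm i) = 0 := by
    intro i; rw [Hxeq i]; exact hbad0 (mm i) (E (kk i))
  have HxQ : ∀ i, E (kk i) * xx i = xx i → ¬ xx i * E (kk i) = xx i := by
    intro i
    rw [Hxeq i]
    exact hbadQ (mm i) (E (kk i))
  have Hn : ∀ i,
      ((E (kk i) * xx i : ↥(invLimN R π)) : ∀ k, R k) (nn i) ≠ (xx i : ∀ k, R k) (nn i) ∨
      ((xx i * E (kk i) : ↥(invLimN R π)) : ∀ k, R k) (nn i) ≠ (xx i : ∀ k, R k) (nn i) :=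
    fun i => hwit (E (kk i)) (xx i) (HxQ i)
  have Hnm : ∀ i, mm i < nn i := by
    intro i
    by_contra hle
    have hz : (xx i : ∀ k, R k) (nn i) = 0 :=
      zero_below π (xx i) (mm i) (Hx0 i) (nn i) (by omega)
    rcases Hn i with h' | h'
    · exact h' (by rw [invLim_mul_apply, hz, mul_zero])
    · exact h' (by rw [invLim_mul_apply, hz, zero_mul])
  have Hmono : ∀ i j, i < j → nn i < mm j := by
    intro i j hij
    induction j with
    | zero => omega
    | succ j ih =>
        by_cases hij' : i < j
        · have h1 := ih hij'
          have h2 := Hnm j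
          have h3 := Hm j
          omega
        · have : i = j := by omega
          subst this
          rw [Hm i]
          omega
  have Hkmono : ∀ i, i ≤ kk i := by
    intro i
    induction i with
    | zero => omega
    | succ i ih =>
        have := Hk i
        have h2 : kk i + 1 ≤ kk (i + 1) := by rw [Hk i]; exact le_max_left _ _
        omega
  have Hfix : ∀ i, E (kk (i + 1)) * tt i = tt i ∧ tt i * E (kk (i + 1)) = tt i := by
    intro i
    refine hNfix (tt i) (kk (i + 1)) ?_
    rw [Hk i]
    exact le_max_right _ _
  have Hmi : ∀ i, i ≤ mm i := by
    intro i
    induction i with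
    | zero => omega
    | succ i ih =>
        have h1 := Hnm i
        have h2 := Hm i
        omega
  have Htsum : ∀ i, tt i = ∑ j ∈ Finset.range (i + 1), xx j := by
    intro i
    induction i with
    | zero => rw [Finset.sum_range_one]; exact dt_zero E bad wit Nfix
    | succ i ih => rw [Finset.sum_range_succ, ← ih, Ht i]
  -- construct the element Y
  have hYmem : (fun n => ∑ j ∈ Finset.range (n + 1), (xx j : ∀ k, R k) n) ∈ invLimN R π := by
    intro n
    have hlast : (xx (n + 1) : ∀ k, R k) n = 0 := by
      refine zero_below π (xx (n + 1)) (mm (n + 1)) (Hx0 (n + 1)) n ?_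
      have := Hmi (n + 1); omega
    rw [map_sum, Finset.sum_range_succ]
    simp only [invLim_compat π]
    rw [hlast, add_zero]
  set Y : ↥(invLimN R π) := ⟨_, hYmem⟩ with hY
  -- the contradiction
  set i : ℕ := Nfix Y + 1 with hi
  have hkY : Nfix Y ≤ kk i := le_trans (by omega) (Hkmono i)
  obtain ⟨hfixl, hfixr⟩ := hNfix Y (kk i) hkY
  set n : ℕ := nn i with hn
  -- Y agrees with tt i at coordinate n
  have hYn : (Y : ∀ k, R k) n = (tt i : ∀ k, R k) n := by
    have hsub : Finset.range (i + 1) ⊆ Finset.range (n + 1) := by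
      apply Finset.range_subset_range.mpr
      have h1 := Hnm i
      have h2 := Hmi i
      omega
    have hzero : ∀ j ∈ Finset.range (n + 1), j ∉ Finset.range (i + 1) →
        (xx j : ∀ k, R k) n = 0 := by
      intro j _ hj2
      have hij : i < j := by
        simp only [Finset.mem_range] at hj2
        omega
      refine zero_below π (xx j) (mm j) (Hx0 j) n ?_
      have := Hmono i j hij
      omega
    have : (Y : ∀ k, R k) n = ∑ j ∈ Finset.range (n + 1), (xx j : ∀ k, R k) n := rfl
    rw [this, ← Finset.sum_subset hsub hzero, Htsum i, invLim_sum_apply]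
  have hts : tt i = tt (Nfix Y) + xx i := Ht (Nfix Y)
  obtain ⟨hsl, hsr⟩ := Hfix (Nfix Y)
  -- coordinates
  have hcl : ((E (kk i) * xx i : ↥(invLimN R π)) : ∀ k, R k) n = (xx i : ∀ k, R k) n := by
    have c1 : ((E (kk i) * Y : ↥(invLimN R π)) : ∀ k, R k) n = (Y : ∀ k, R k) n :=
      congrArg (fun z : ↥(invLimN R π) => (z : ∀ k, R k) n) hfixl
    rw [invLim_mul_apply] at c1
    rw [hYn, hts, invLim_add_apply] at c1
    have c2 : ((E (kk i) * tt (Nfix Y) : ↥(invLimN R π)) : ∀ k, R k) n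
        = (tt (Nfix Y) : ∀ k, R k) n :=
      congrArg (fun z : ↥(invLimN R π) => (z : ∀ k, R k) n) hsl
    rw [invLim_mul_apply] at c2
    rw [mul_add, c2] at c1
    rw [invLim_mul_apply]
    exact add_left_cancel c1
  have hcr : ((xx i * E (kk i) : ↥(invLimN R π)) : ∀ k, R k) n = (xx i : ∀ k, R k) n := by
    have c1 : ((Y * E (kk i) : ↥(invLimN R π)) : ∀ k, R k) n = (Y : ∀ k, R k) n :=
      congrArg (fun z : ↥(invLimN R π) => (z : ∀ k, R k) n) hfixr
    rw [invLim_mul_apply] at c1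
    rw [hYn, hts, invLim_add_apply] at c1
    have c2 : ((tt (Nfix Y) * E (kk i) : ↥(invLimN R π)) : ∀ k, R k) n
        = (tt (Nfix Y) : ∀ k, R k) n :=
      congrArg (fun z : ↥(invLimN R π) => (z : ∀ k, R k) n) hsr
    rw [invLim_mul_apply] at c2
    rw [add_mul, c2] at c1
    rw [invLim_mul_apply]
    exact add_left_cancel c1
  rcases Hn i with h' | h'
  · exact h' hcl
  · exact h' hcr

end Aux

/-- A surjective inverse limit `R = lim← R_n` is σ-unital iff each `R_n` is
σ-unital and some kernel `ker ρ_m` of a coordinate evaluation (these kernels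
being the elements vanishing in the `m`-th coordinate, and decreasing in `m`)
has a unit in `R`. -/
theorem stmt11 (R : ℕ → Type*) [∀ n, NonUnitalRing (R n)]
    (π : ∀ n, R (n + 1) →ₙ+* R n)
    (hsurj : ∀ n, Function.Surjective (π n)) :
    SigmaUnital ↥(invLimN R π) ↔
      ((∀ n, SigmaUnital (R n)) ∧
        ∃ m, ∃ e : ↥(invLimN R π), ∀ x : ↥(invLimN R π),
          (x : ∀ n, R n) m = 0 → e * x = x ∧ x * e = x) := by
  constructor
  · intro h
    exact ⟨fun n => sigma_coord π hsurj h n, forward_ker π h⟩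
  · rintro ⟨hall, m, e, he⟩
    exact converse_dir π hsurj hall m e he
end
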